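/- arXiv:1605.09516 — 2 statements merged into one kernel-verified Lean document; each statement's English description precedes it below -/
import Mathlib

section
/- For all integers n' ≥ 1 and k with n' ≤ k ≤ 3n', the probability that exactly one of n' nodes beeps when each beeps independently with probability 1/k, namely (n'/k)·(1 - 1/k)^{n'-1}, is at least 1/5. -/
/-!
With `t = n'/k ∈ [1/3, 1]`, the estimate `log (1 - 1/k) ≥ -1/(k - 1)` gives
`(1 - 1/k)^(n'-1) ≥ exp (-(n'-1)/(k-1)) ≥ exp (-t)`, so the probability is at least `t e^{-t}`.
On `[1/3, 1]` one has `e^t (2 - t) ≤ e^t e^{1-t} = e < 25/9 ≤ 5t (2 - t)`, i.e. `e^t ≤ 5t`.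
-/

open Real

lemma Real.exp_neg_inv_sub_one_le_one_sub_inv {x : ℝ} (hx : 1 < x) :
    exp (-(x - 1)⁻¹) ≤ 1 - x⁻¹ := by
  have hpos : 0 < 1 - x⁻¹ := sub_pos.mpr (inv_lt_one_of_one_lt₀ hx)
  have hinv : 1 - (1 - x⁻¹)⁻¹ = -(x - 1)⁻¹ := by
    field_simp [(sub_pos.mpr hx).ne']
    ring
  rw [← exp_log hpos, exp_le_exp, ← hinv]
  exact one_sub_inv_le_log_of_pos hpos

lemma Real.exp_neg_div_le_one_sub_inv_pow {n : ℕ} {x : ℝ} (hn : 1 ≤ n) (hnx : n ≤ x) :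
    exp (-(n / x)) ≤ (1 - x⁻¹) ^ (n - 1) := by
  obtain ⟨m, rfl⟩ := Nat.exists_eq_add_of_le' hn
  rcases Nat.eq_zero_or_pos m with rfl | hm
  · have hx : (1 : ℝ) ≤ x := by simpa using hnx
    simpa using zero_le_one.trans hx
  have hx : 1 < x := lt_of_lt_of_le (by exact_mod_cast Nat.lt_add_of_pos_left hm) hnx
  have hmx : (m : ℝ) / (x - 1) ≤ (m + 1 : ℕ) / x := by
    rw [div_le_div_iff₀ (by linarith) (by linarith)]
    push_cast at hnx ⊢
    nlinarith
  calc exp (-((m + 1 : ℕ) / x)) ≤ exp (-(m / (x - 1))) := exp_le_exp.mpr (neg_le_neg hmx)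
    _ = exp (-(x - 1)⁻¹) ^ m := by rw [← exp_nat_mul]; ring_nf
    _ ≤ (1 - x⁻¹) ^ (m + 1 - 1) := by
      rw [Nat.add_sub_cancel]
      exact pow_le_pow_left₀ (exp_pos _).le (exp_neg_inv_sub_one_le_one_sub_inv hx) m

lemma Real.exp_le_five_mul {t : ℝ} (ht₀ : 1 / 3 ≤ t) (ht₁ : t ≤ 1) : exp t ≤ 5 * t := by
  have htwo : 2 - t ≤ exp (1 - t) := by linarith [add_one_le_exp (1 - t)]
  have hsum : exp t * exp (1 - t) = exp 1 := by rw [← exp_add, add_sub_cancel]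
  have he : exp t * (2 - t) ≤ exp 1 :=
    hsum ▸ mul_le_mul_of_nonneg_left htwo (exp_pos t).le
  nlinarith [exp_one_lt_d9, mul_nonneg (sub_nonneg.mpr ht₀) (sub_nonneg.mpr ht₁)]

/-- If each of `n' ≥ 1` nodes beeps independently with probability `1/k`, with
`n' ≤ k ≤ 3n'`, then the probability `(n'/k) * (1 - 1/k)^(n'-1)` that exactly
one node beeps is at least `1/5`. -/
theorem exactly_one_beep_prob_ge (n' k : ℕ) (hn : 1 ≤ n') (hk₁ : n' ≤ k) (hk₂ : k ≤ 3 * n') :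
    (1 : ℝ) / 5 ≤ ((n' : ℝ) / (k : ℝ)) * (1 - 1 / (k : ℝ)) ^ (n' - 1) := by
  have hk : (0 : ℝ) < k := by exact_mod_cast (hn.trans hk₁)
  set t : ℝ := n' / k
  have hk₂' : (k : ℝ) ≤ 3 * n' := by exact_mod_cast hk₂
  have ht₀ : 1 / 3 ≤ t := by
    rw [le_div_iff₀ hk]
    linarith
  have ht₁ : t ≤ 1 := (div_le_one hk).mpr (by exact_mod_cast hk₁)
  have hbeep : 1 / 5 ≤ t * exp (-t) := by
    rw [exp_neg, ← div_eq_mul_inv, le_div_iff₀ (exp_pos t)]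
    linarith [exp_le_five_mul ht₀ ht₁]
  calc (1 : ℝ) / 5 ≤ t * exp (-t) := hbeep
    _ ≤ t * (1 - 1 / k) ^ (n' - 1) := by
      rw [one_div (k : ℝ)]
      gcongr
      exact exp_neg_div_le_one_sub_inv_pow hn (by exact_mod_cast hk₁)
end

section
/- For every integer n' ≥ 1, the real function f(x) = (n'/x)·(1 - 1/x)^{n'-1} is antitone (nonincreasing) on the interval [n', ∞) (restricted to x > 1 when needed). -/
/-- For every integer `n' ≥ 1`, the function `x ↦ (n'/x) * (1 - 1/x)^(n'-1)`
(the probability that exactly one of `n'` nodes beeps when each beeps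
independently with probability `1/x`) is antitone (nonincreasing) on the
interval `[n', ∞)` (restricted to `x > 1` when needed). -/
theorem exactly_one_beep_prob_antitone (n' : ℕ) (hn : 1 ≤ n') :
    AntitoneOn (fun x : ℝ => ((n' : ℝ) / x) * (1 - 1 / x) ^ (n' - 1))
      (Set.Ici (n' : ℝ) ∩ Set.Ioi 1) := by
  set m : ℕ := n' - 1 with hm
  have hconv : Convex ℝ (Set.Ici (n' : ℝ) ∩ Set.Ioi 1) :=
    (convex_Ici _).inter (convex_Ioi _)
  have hderiv : ∀ x ∈ interior (Set.Ici (n' : ℝ) ∩ Set.Ioi 1),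
      HasDerivAt (fun x : ℝ => ((n' : ℝ) / x) * (1 - 1 / x) ^ m)
        ((n':ℝ) * (-(x^2)⁻¹) * (1 - 1/x) ^ m
          + (n':ℝ) / x * ((m : ℝ) * (1 - 1/x) ^ (m - 1) * (x^2)⁻¹)) x := by
    intro x hx
    rw [interior_inter, interior_Ici, interior_Ioi] at hx
    have hx1 : (1:ℝ) < x := hx.2
    have hx0 : x ≠ 0 := by intro h; rw [h] at hx1; linarith
    have h1 : HasDerivAt (fun x : ℝ => ((n' : ℝ) / x)) ((n':ℝ) * (-(x^2)⁻¹)) x := by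
      simpa [div_eq_mul_inv] using (hasDerivAt_inv hx0).const_mul (n':ℝ)
    have h2 : HasDerivAt (fun x : ℝ => (1 - 1 / x : ℝ)) ((x^2)⁻¹) x := by
      simpa [one_div] using ((hasDerivAt_inv hx0).const_sub 1)
    exact h1.mul (h2.pow m)
  apply antitoneOn_of_deriv_nonpos hconv
  · apply ContinuousOn.mul
    · apply ContinuousOn.div continuousOn_const continuousOn_id
      intro x hx
      have h1 : (1:ℝ) < x := hx.2
      simp only [id_eq]
      intro h; rw [h] at h1; linarith
    · apply ContinuousOn.pow
      apply ContinuousOn.sub continuousOn_const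
      apply ContinuousOn.div continuousOn_const continuousOn_id
      intro x hx
      have h1 : (1:ℝ) < x := hx.2
      simp only [id_eq]
      intro h; rw [h] at h1; linarith
  · intro x hx
    exact (hderiv x hx).differentiableAt.differentiableWithinAt
  · intro x hx
    have h4 := hderiv x hx
    rw [interior_inter, interior_Ici, interior_Ioi] at hx
    have hx1 : (1:ℝ) < x := hx.2
    have hxn : (n' : ℝ) < x := hx.1
    have hx0 : x ≠ 0 := by linarith
    have hxpos : (0:ℝ) < x := by linarith
    rw [h4.deriv]
    have ht0 : (0:ℝ) < 1 - 1/x := by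
      have : 1/x < 1 := by
        rw [div_lt_one hxpos]; exact hx1
      linarith
    have hx2 : (0:ℝ) < x^2 := by positivity
    rcases Nat.eq_zero_or_pos m with h|h
    · rw [h]
      simp only [pow_zero, Nat.cast_zero, zero_mul, mul_zero, mul_one, add_zero]
      have : (0:ℝ) ≤ (n':ℝ) * (x^2)⁻¹ := by positivity
      linarith
    · have hms : m - 1 + 1 = m := Nat.succ_pred_eq_of_pos h
      have hpow : (1 - 1/x : ℝ) ^ m = (1 - 1/x) ^ (m - 1) * (1 - 1/x) := by
        rw [← pow_succ, hms]
      have hmn : (m : ℝ) = (n' : ℝ) - 1 := by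
        rw [hm]; push_cast [Nat.cast_sub hn]; ring
      have key : (n':ℝ) * (-(x^2)⁻¹) * ((1 - 1/x) ^ (m-1) * (1 - 1/x))
          + (n':ℝ) / x * ((m : ℝ) * (1 - 1/x) ^ (m - 1) * (x^2)⁻¹)
          = (n':ℝ) * (x^2)⁻¹ * (1 - 1/x)^(m-1) * (((m:ℝ)+1)/x - 1) := by
        field_simp
        ring
      rw [hpow, key, hmn]
      have hn1 : ((n':ℝ) - 1 + 1) = (n':ℝ) := by ring
      rw [hn1]
      have hfrac : (n':ℝ)/x - 1 ≤ 0 := by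
        have : (n':ℝ)/x < 1 := (div_lt_one hxpos).mpr hxn
        linarith
      have hpos : (0:ℝ) ≤ (n':ℝ) * (x^2)⁻¹ * (1 - 1/x)^(m-1) := by positivity
      exact mul_nonpos_of_nonneg_of_nonpos hpos hfrac
end
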